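/- arXiv:1401.5428 — 2 statements merged into one kernel-verified Lean document; each statement's English description precedes it below -/
import Mathlib

section
/- Let H : B² → ℂ² be a map in the class M₋, with Taylor expansion at the origin H(z) = (-z₁ + Σ_{|α|≥2} q¹_α z^α, -z₂ + Σ_{|α|≥2} q²_α z^α). Then |q¹_{0,2}| ≤ 3√3/2, where q¹_{0,2} = (1/2)·∂²H₁/∂z₂²(0). -/
/-! Test `Re⟨H(z), z⟩ ≤ 0` on the parabola `γ(ζ) = (c ζ², t ζ)`, which maps the unit disc into `B²`
when `|c|² + t² ≤ 1`. On `|ζ| = r` we have `ζ̄ = r²/ζ`, so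
`⟨H(γ ζ), γ ζ⟩ = r² (r² c̄ H₁(γ ζ)/ζ² + t H₂(γ ζ)/ζ)`, and the bracket is holomorphic in `ζ`.
Since `H₁(γ ζ) = (q t² - c) ζ² + o(ζ²)` and `H₂(γ ζ) = -t ζ + o(ζ)`, the maximum principle for its
real part at `ζ = 0` gives `Re(c̄ (q t² - c)) ≤ t²` after letting `r → 1`.
The choice `c = q / (√3 |q|)`, `t² = 2/3` turns this into `|q| ≤ 3√3/2`. -/

open Complex

noncomputable section

/-- The open unit ball in `ℂ²`. -/
def B2 : Set (ℂ × ℂ) := {z | ‖z.1‖ ^ 2 + ‖z.2‖ ^ 2 < 1}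

/-- The class `M₋` of holomorphic maps `H : B² → ℂ²` with `H(0) = 0`, `dH₀ = -id`,
and `Re⟨H(z), z⟩ ≤ 0` on `B²`. -/
def MminusClass (H : ℂ × ℂ → ℂ × ℂ) : Prop :=
  DifferentiableOn ℂ H B2 ∧ H 0 = 0 ∧
  (∀ z : ℂ × ℂ, fderiv ℂ H 0 z = -z) ∧
  ∀ z ∈ B2, ((H z).1 * (starRingEnd ℂ) z.1 + (H z).2 * (starRingEnd ℂ) z.2).re ≤ 0

/-- The coefficient `q¹_{0,2} = (1/2)·∂²H₁/∂z₂²(0)`. -/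
def shearCoef (H : ℂ × ℂ → ℂ × ℂ) : ℂ :=
  (1 / 2 : ℂ) * iteratedDeriv 2 (fun w : ℂ => (H (0, w)).1) 0

open Metric Set Filter Topology Asymptotics
open scoped ComplexConjugate

theorem tendstoLocallyUniformlyOn_of_continuousAt_uncurry {ι α β : Type*} [TopologicalSpace ι]
    [TopologicalSpace α] [UniformSpace β] {F : ι → α → β} {i : ι} {s : Set α}
    (hF : ∀ x ∈ s, ContinuousAt ↿F (i, x)) : TendstoLocallyUniformlyOn F (F i) (𝓝 i) s := by
  refine tendstoLocallyUniformlyOn_iff_forall_tendsto.mpr fun x hx => ?_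
  have hslice : Tendsto (fun y : ι × α => F i y.2) (𝓝 i ×ˢ 𝓝[s] x) (𝓝 (F i x)) :=
    ((hF x hx).comp (Continuous.prodMk_right i).continuousAt).tendsto.comp
      (tendsto_snd.mono_right nhdsWithin_le_nhds)
  have hjoint : Tendsto ↿F (𝓝 i ×ˢ 𝓝[s] x) (𝓝 (F i x)) :=
    (hF x hx).tendsto.mono_left (by rw [nhds_prod_eq]; exact prod_mono le_rfl nhdsWithin_le_nhds)
  exact (hslice.prodMk_nhds hjoint).mono_right (nhds_le_uniformity _)

section PartialDerivative

variable {E : Type*} [NormedAddCommGroup E] [NormedSpace ℂ E] [CompleteSpace E]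

/- The slices `f (·, w)` converge locally uniformly as `w → z.2`, hence so do their derivatives
(Weierstrass). -/
theorem continuousAt_deriv_fst {f : ℂ × ℂ → E} {z : ℂ × ℂ}
    (hf : ∀ᶠ p in 𝓝 z, DifferentiableAt ℂ f p) :
    ContinuousAt (fun p : ℂ × ℂ => deriv (fun x => f (x, p.2)) p.1) z := by
  obtain ⟨r, hr, hball⟩ := Metric.eventually_nhds_iff_ball.mp hf
  have hmem {x w : ℂ} (hx : x ∈ ball z.1 r) (hw : w ∈ ball z.2 r) : (x, w) ∈ ball z r := by
    rw [← ball_prod_same]; exact ⟨hx, hw⟩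
  set F : ℂ × ℂ → ℂ → E := fun p x => f (x, p.2)
  have hFd : ∀ᶠ p in 𝓝 z, DifferentiableOn ℂ (F p) (ball z.1 r) := by
    filter_upwards [ball_mem_nhds z hr] with p hp x hx
    have hp2 : p.2 ∈ ball z.2 r := by rw [← ball_prod_same] at hp; exact hp.2
    exact ((hball _ (hmem hx hp2)).comp x (by fun_prop)).differentiableWithinAt
  have hFu : TendstoLocallyUniformlyOn F (F z) (𝓝 z) (ball z.1 r) :=
    tendstoLocallyUniformlyOn_of_continuousAt_uncurry fun x hx =>
      ContinuousAt.comp (g := f) (f := fun q : (ℂ × ℂ) × ℂ => (q.2, q.1.2))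
        (hball _ (hmem hx (mem_ball_self hr))).continuousAt (by fun_prop)
  have hcont : ContinuousAt (deriv (F z)) z.1 :=
    ((hFd.self_of_nhds).analyticAt (ball_mem_nhds _ hr)).deriv.continuousAt
  refine (hFu.deriv hFd isOpen_ball).tendsto_comp hcont.continuousWithinAt (mem_ball_self hr) ?_
  rw [isOpen_ball.nhdsWithin_eq (mem_ball_self hr)]
  exact continuousAt_fst

theorem isLittleO_sub_sub_deriv_fst {f : ℂ × ℂ → E} {z : ℂ × ℂ}
    (hf : ∀ᶠ p in 𝓝 z, DifferentiableAt ℂ f p) :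
    (fun p : ℂ × ℂ => f p - f (z.1, p.2) - (p.1 - z.1) • deriv (fun x => f (x, z.2)) z.1)
      =o[𝓝 z] fun p => p.1 - z.1 := by
  refine isLittleO_iff.mpr fun ε hε => ?_
  have hd := (continuousAt_deriv_fst hf).eventually (closedBall_mem_nhds _ hε)
  obtain ⟨δ, hδ, hball⟩ := Metric.eventually_nhds_iff_ball.mp (hf.and hd)
  filter_upwards [ball_mem_nhds z hδ] with p hp
  rw [← ball_prod_same] at hp
  have hmem : ∀ x ∈ ball z.1 δ, (x, p.2) ∈ ball z δ := fun x hx => by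
    rw [← ball_prod_same]; exact ⟨hx, hp.2⟩
  have key := (convex_ball z.1 δ).norm_image_sub_le_of_norm_hasDerivWithin_le
    (f := fun x => f (x, p.2) - (x - z.1) • deriv (fun x => f (x, z.2)) z.1)
    (f' := fun x => deriv (fun y => f (y, p.2)) x - deriv (fun x => f (x, z.2)) z.1)
    (C := ε) (fun x hx => ?_) (fun x hx => ?_) (mem_ball_self hδ) hp.1
  · simpa [sub_right_comm] using key
  · have h : HasDerivAt (fun y => f (y, p.2)) (deriv (fun y => f (y, p.2)) x) x :=
      ((hball _ (hmem x hx)).1.comp x (by fun_prop)).hasDerivAt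
    simpa using (h.fun_sub (((hasDerivAt_id x).sub_const z.1).smul_const _)).hasDerivWithinAt
  · simpa [dist_eq_norm] using (hball _ (hmem x hx)).2

end PartialDerivative

theorem tendsto_comp_mul_div_sq {φ : ℂ → ℂ} (hφ : AnalyticAt ℂ φ 0) (h0 : φ 0 = 0)
    (h1 : deriv φ 0 = 0) (b : ℂ) :
    Tendsto (fun ζ => φ (b * ζ) / ζ ^ 2) (𝓝[≠] 0) (𝓝 (b ^ 2 * (iteratedDeriv 2 φ 0 / 2))) := by
  obtain ⟨Φ, hΦ, hφΦ⟩ := hφ.exists_eq_sum_add_pow_mul 3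
  have hlim : Tendsto (fun ζ => b ^ 2 * (iteratedDeriv 2 φ 0 / 2) + b ^ 3 * ζ * Φ (b * ζ))
      (𝓝 0) (𝓝 (b ^ 2 * (iteratedDeriv 2 φ 0 / 2))) := by
    have hc : ContinuousAt (fun ζ => Φ (b * ζ)) 0 :=
      ContinuousAt.comp (g := Φ) (by simpa using hΦ.continuousAt) (by fun_prop)
    simpa using tendsto_const_nhds.add ((tendsto_const_nhds.mul tendsto_id).mul hc.tendsto)
  refine (hlim.mono_left nhdsWithin_le_nhds).congr' ?_
  filter_upwards [self_mem_nhdsWithin] with ζ (hζ : ζ ≠ 0)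
  rw [hφΦ]
  simp only [Finset.sum_range_succ, Finset.sum_range_zero, iteratedDeriv_zero, iteratedDeriv_one,
    h0, h1, smul_eq_mul]
  field_simp
  norm_num [Nat.factorial]
  ring

theorem tendsto_comp_parabola_div_sq {f : ℂ × ℂ → ℂ} (hf : ∀ᶠ p in 𝓝 0, DifferentiableAt ℂ f p)
    (h0 : f 0 = 0) (h₂ : deriv (fun w => f (0, w)) 0 = 0) (b c : ℂ) :
    Tendsto (fun ζ => f (c * ζ ^ 2, b * ζ) / ζ ^ 2) (𝓝[≠] 0)
      (𝓝 (c * deriv (fun x => f (x, 0)) 0 +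
        b ^ 2 * (iteratedDeriv 2 (fun w => f (0, w)) 0 / 2))) := by
  have hφ : AnalyticAt ℂ (fun w => f (0, w)) 0 := by
    refine Complex.analyticAt_iff_eventually_differentiableAt.mpr ?_
    filter_upwards [(Continuous.prodMk_right (0 : ℂ)).tendsto 0 |>.eventually hf] with w hw
    exact hw.comp w (by fun_prop)
  have hγ : Tendsto (fun ζ : ℂ => (c * ζ ^ 2, b * ζ)) (𝓝 0) (𝓝 0) := by
    simpa [Prod.mk_zero_zero] using
      (by fun_prop : Continuous fun ζ : ℂ => (c * ζ ^ 2, b * ζ)).tendsto 0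
  have hrem : (fun ζ => f (c * ζ ^ 2, b * ζ) - f (0, b * ζ) -
      c * ζ ^ 2 * deriv (fun x => f (x, 0)) 0) =o[𝓝 0] fun ζ => ζ ^ 2 := by
    have h := (isLittleO_sub_sub_deriv_fst hf).comp_tendsto hγ
    simp only [Function.comp_def, Prod.fst_zero, Prod.snd_zero, sub_zero, smul_eq_mul] at h
    exact h.trans_isBigO (isBigO_const_mul_self c _ _)
  have h := ((hrem.tendsto_div_nhds_zero.mono_left nhdsWithin_le_nhds).add
    (tendsto_comp_mul_div_sq hφ h0 h₂ b)).const_add (c * deriv (fun x => f (x, 0)) 0)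
  rw [zero_add] at h
  refine h.congr' ?_
  filter_upwards [self_mem_nhdsWithin] with ζ (hζ : ζ ≠ 0)
  field_simp
  ring

theorem DiffContOnCl.re_le_of_forall_mem_sphere {g : ℂ → ℂ} {c : ℂ} {r M : ℝ} (hr : 0 < r)
    (hg : DiffContOnCl ℂ g (ball c r)) (hM : ∀ ζ ∈ sphere c r, (g ζ).re ≤ M) : (g c).re ≤ M := by
  rw [← Real.exp_le_exp, ← Complex.norm_exp]
  refine norm_le_of_forall_mem_frontier_norm_le isBounded_ball
    (differentiable_exp.diffContOnCl.comp hg (mapsTo_univ _ _)) (fun ζ hζ => ?_)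
    (subset_closure (mem_ball_self hr))
  rw [frontier_ball c hr.ne'] at hζ
  simpa [Complex.norm_exp] using hM ζ hζ

theorem differentiableOn_update_div_sq {f : ℂ → ℂ} {s : Set ℂ} {L : ℂ} (hs : s ∈ 𝓝 0)
    (hf : DifferentiableOn ℂ f s) (hL : Tendsto (fun ζ => f ζ / ζ ^ 2) (𝓝[≠] 0) (𝓝 L)) :
    DifferentiableOn ℂ (Function.update (fun ζ => f ζ / ζ ^ 2) 0 L) s := by
  refine (differentiableOn_compl_singleton_and_continuousAt_iff hs).mp
    ⟨fun ζ hζ => ?_, continuousAt_update_same.mpr hL⟩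
  have hζ0 : ζ ≠ 0 := hζ.2
  refine (((hf ζ hζ.1).mono sdiff_subset).div (differentiableWithinAt_pow 2)
    (pow_ne_zero 2 hζ0)).congr (fun y hy => ?_) ?_
  · exact Function.update_of_ne hy.2 _ _
  · exact Function.update_of_ne hζ0 _ _

theorem re_add_re_deriv_nonpos {f g : ℂ → ℂ} {L : ℂ} (hf : DifferentiableOn ℂ f (ball 0 1))
    (hg : DifferentiableOn ℂ g (ball 0 1)) (hg0 : g 0 = 0)
    (hL : Tendsto (fun ζ => f ζ / ζ ^ 2) (𝓝[≠] 0) (𝓝 L))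
    (hre : ∀ ζ ∈ ball (0 : ℂ) 1, (f ζ * conj ζ ^ 2 + g ζ * conj ζ).re ≤ 0) :
    L.re + (deriv g 0).re ≤ 0 := by
  have hnhds : ball (0 : ℂ) 1 ∈ 𝓝 0 := ball_mem_nhds 0 one_pos
  set A := Function.update (fun ζ => f ζ / ζ ^ 2) 0 L
  have hA : DifferentiableOn ℂ A (ball 0 1) := differentiableOn_update_div_sq hnhds hf hL
  set B := dslope g 0
  have hB : DifferentiableOn ℂ B (ball 0 1) := (differentiableOn_dslope hnhds).mpr hg
  have hcircle : ∀ r ∈ Ioo (0 : ℝ) 1, r ^ 2 * L.re + (deriv g 0).re ≤ 0 := by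
    rintro r ⟨hr0, hr1⟩
    have hk : DiffContOnCl ℂ (fun ζ => (r : ℂ) ^ 2 * A ζ + B ζ) (ball 0 r) := by
      refine DifferentiableOn.diffContOnCl ((hA.const_mul _).add hB |>.mono ?_)
      rw [closure_ball _ hr0.ne']
      exact closedBall_subset_ball hr1
    have := hk.re_le_of_forall_mem_sphere (M := 0) hr0 fun ζ hζ => ?_
    · simpa [A, B, ← Complex.ofReal_pow] using this
    rw [mem_sphere_zero_iff_norm] at hζ
    have hζ0 : ζ ≠ 0 := by rintro rfl; simp at hζ; linarith
    have hconj : conj ζ = (r : ℂ) ^ 2 / ζ := by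
      rw [eq_div_iff hζ0, mul_comm, Complex.mul_conj', hζ]
    have hid : f ζ * conj ζ ^ 2 + g ζ * conj ζ = ((r ^ 2 : ℝ) : ℂ) * ((r : ℂ) ^ 2 * A ζ + B ζ) := by
      simp only [A, B, Function.update_of_ne hζ0, dslope_of_ne _ hζ0, slope_def_field, hg0,
        sub_zero, hconj]
      push_cast
      field_simp
    have := hre ζ (by simpa [hζ] using hr1)
    rw [hid, Complex.re_ofReal_mul] at this
    exact nonpos_of_mul_nonpos_right this (by positivity)
  have hlim : Tendsto (fun r : ℝ => r ^ 2 * L.re + (deriv g 0).re) (𝓝[<] 1)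
      (𝓝 (L.re + (deriv g 0).re)) := by
    simpa using ((by fun_prop : Continuous fun r : ℝ => r ^ 2 * L.re + (deriv g 0).re).tendsto 1
      ).mono_left nhdsWithin_le_nhds
  exact le_of_tendsto hlim (eventually_of_mem (Ioo_mem_nhdsLT one_pos) hcircle)

theorem isOpen_B2 : IsOpen B2 :=
  isOpen_lt (by fun_prop) continuous_const

theorem mapsTo_parabola_B2 {c : ℂ} {t : ℝ} (hct : ‖c‖ ^ 2 + t ^ 2 ≤ 1) :
    MapsTo (fun ζ : ℂ => (c * ζ ^ 2, (t : ℂ) * ζ)) (ball 0 1) B2 := by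
  intro ζ hζ
  rw [mem_ball_zero_iff] at hζ
  have hζ2 : ‖ζ‖ ^ 2 < 1 := by nlinarith [norm_nonneg ζ]
  show ‖c * ζ ^ 2‖ ^ 2 + ‖(t : ℂ) * ζ‖ ^ 2 < 1
  rw [norm_mul, norm_mul, norm_pow, Complex.norm_real, Real.norm_eq_abs]
  nlinarith [sq_abs t, mul_le_mul_of_nonneg_left hζ2.le (sq_nonneg ‖c‖),
    mul_nonneg (sq_nonneg ‖c‖) (sq_nonneg ‖ζ‖), sq_nonneg ‖ζ‖]

namespace MminusClass

variable {H : ℂ × ℂ → ℂ × ℂ} (hH : MminusClass H)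
include hH

theorem eventually_differentiableAt : ∀ᶠ p in 𝓝 0, DifferentiableAt ℂ H p := by
  filter_upwards [isOpen_B2.mem_nhds (by simp [B2] : (0 : ℂ × ℂ) ∈ B2)] with p hp
  exact hH.1.differentiableAt (isOpen_B2.mem_nhds hp)

theorem hasDerivAt_comp {γ : ℂ → ℂ × ℂ} {v : ℂ × ℂ} (hγ : HasDerivAt γ v 0) (hγ0 : γ 0 = 0) :
    HasDerivAt (fun ζ => H (γ ζ)) (-v) 0 := by
  have hD : fderiv ℂ H 0 = -ContinuousLinearMap.id ℂ (ℂ × ℂ) :=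
    ContinuousLinearMap.ext hH.2.2.1
  have h := hH.eventually_differentiableAt.self_of_nhds.hasFDerivAt
  rw [hD, ← hγ0] at h
  simpa [Function.comp_def] using h.comp_hasDerivAt 0 hγ

theorem tendsto_fst_parabola_div_sq (c t : ℂ) :
    Tendsto (fun ζ => (H (c * ζ ^ 2, t * ζ)).1 / ζ ^ 2) (𝓝[≠] 0) (𝓝 (shearCoef H * t ^ 2 - c)) := by
  have hfst {v : ℂ × ℂ} {γ : ℂ → ℂ × ℂ} (hγ : HasDerivAt γ v 0) (hγ0 : γ 0 = 0) :
      deriv (fun ζ => (H (γ ζ)).1) 0 = -v.1 :=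
    ((ContinuousLinearMap.fst ℂ ℂ ℂ).hasFDerivAt.comp_hasDerivAt 0
      (hH.hasDerivAt_comp hγ hγ0)).deriv
  have h₁ := hfst ((hasDerivAt_id 0).prodMk (hasDerivAt_const 0 (0 : ℂ))) rfl
  have h₂ := hfst ((hasDerivAt_const 0 (0 : ℂ)).prodMk (hasDerivAt_id 0)) rfl
  have h := tendsto_comp_parabola_div_sq (f := fun p => (H p).1)
    (hH.eventually_differentiableAt.mono fun p hp => hp.fst) (by simp [hH.2.1])
    (by simpa using h₂) t c
  convert h using 2
  simp only [id] at h₁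
  rw [h₁, shearCoef]
  ring

theorem re_conj_mul_le {c : ℂ} {t : ℝ} (hct : ‖c‖ ^ 2 + t ^ 2 ≤ 1) :
    (conj c * (shearCoef H * t ^ 2 - c)).re ≤ t ^ 2 := by
  have hd : DifferentiableOn ℂ (fun ζ : ℂ => H (c * ζ ^ 2, (t : ℂ) * ζ)) (ball 0 1) :=
    hH.1.comp (by fun_prop) (mapsTo_parabola_B2 hct)
  have hγ : HasDerivAt (fun ζ : ℂ => (c * ζ ^ 2, (t : ℂ) * ζ)) (0, (t : ℂ)) 0 := by
    simpa using ((hasDerivAt_pow 2 0).const_mul c).prodMk ((hasDerivAt_id 0).const_mul (t : ℂ))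
  have h₂ : deriv (fun ζ : ℂ => (t : ℂ) * (H (c * ζ ^ 2, (t : ℂ) * ζ)).2) 0 = -(t : ℂ) ^ 2 := by
    have := hasFDerivAt_snd.comp_hasDerivAt 0 (hH.hasDerivAt_comp hγ (by simp))
    simpa [sq] using (this.const_mul (t : ℂ)).deriv
  have key := re_add_re_deriv_nonpos (hd.fst.const_mul (conj c)) (hd.snd.const_mul (t : ℂ))
    (by simp [Prod.mk_zero_zero, hH.2.1])
    (by simpa [mul_div_assoc] using (hH.tendsto_fst_parabola_div_sq c t).const_mul (conj c))
    (fun ζ hζ => by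
      convert hH.2.2.2 _ (mapsTo_parabola_B2 hct hζ) using 2
      simp only [map_mul, map_pow, Complex.conj_ofReal]
      ring)
  rw [h₂] at key
  simpa [← Complex.ofReal_pow] using key

end MminusClass

theorem norm_le_of_forall_re_conj_mul_le {q : ℂ}
    (h : ∀ (c : ℂ) (t : ℝ), ‖c‖ ^ 2 + t ^ 2 ≤ 1 → (conj c * (q * t ^ 2 - c)).re ≤ t ^ 2) :
    ‖q‖ ≤ 3 * Real.sqrt 3 / 2 := by
  rcases eq_or_ne q 0 with hq | hq
  · rw [hq, norm_zero]; positivity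
  have hs : Real.sqrt 3 ^ 2 = 3 := Real.sq_sqrt (by norm_num)
  have hs0 : 0 < Real.sqrt 3 := by positivity
  set c : ℂ := ((Real.sqrt 3 * ‖q‖)⁻¹ : ℝ) * q
  set t := Real.sqrt (2 / 3)
  have ht : t ^ 2 = 2 / 3 := Real.sq_sqrt (by norm_num)
  have hcq : conj c * q = ((‖q‖ / Real.sqrt 3 : ℝ) : ℂ) := by
    simp only [c, map_mul, Complex.conj_ofReal, mul_assoc, Complex.conj_mul']
    push_cast
    field_simp
  have hcc : ‖c‖ ^ 2 = 1 / 3 := by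
    rw [norm_mul, Complex.norm_real, Real.norm_of_nonneg (by positivity), mul_pow, inv_pow,
      mul_pow, hs]
    field_simp
  have hre : (conj c * (q * (t : ℂ) ^ 2 - c)).re = ‖q‖ / Real.sqrt 3 * t ^ 2 - ‖c‖ ^ 2 := by
    rw [mul_sub, ← mul_assoc, hcq, Complex.conj_mul', ← Complex.ofReal_pow, ← Complex.ofReal_mul,
      ← Complex.ofReal_pow, ← Complex.ofReal_sub, Complex.ofReal_re]
  have key := h c t (by rw [hcc, ht]; norm_num)
  rw [hre, hcc, ht] at key
  have hq3 : ‖q‖ / Real.sqrt 3 ≤ 3 / 2 := by linarith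
  rw [div_le_iff₀ hs0] at hq3
  linarith

/-- For `H` in `M₋`, the coefficient satisfies `|q¹₀₂| ≤ 3√3/2`. -/
theorem shearCoef_bound (H : ℂ × ℂ → ℂ × ℂ) (hH : MminusClass H) :
    ‖shearCoef H‖ ≤ 3 * Real.sqrt 3 / 2 :=
  norm_le_of_forall_re_conj_mul_le fun _ _ hct => hH.re_conj_mul_le hct
end
end

section
/- The map H(z₁,z₂) = (-z₁ + (3√3/2)z₂², -z₂), restricted to B², belongs to the class M₋; that is, H is holomorphic on B², H(0) = 0, dH₀ = -id, and Re⟨H(z), z⟩ ≤ 0 for all z ∈ B². -/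
open Complex

noncomputable section

/-! The quadratic term contributes at most `‖c‖ |z₁| |z₂|²` to `Re⟨H z, z⟩`, while the linear
part contributes `-(|z₁|² + |z₂|²)`. By AM-GM applied to `|z₁|² + |z₂|²/2 + |z₂|²/2`,
`(3√3/2) |z₁| |z₂|² ≤ ‖z‖³ ≤ ‖z‖²` on the unit ball, so any `‖c‖ ≤ 3√3/2` works. -/

lemma mul_sq_le_add_pow_three {x y : ℝ} (hx : 0 ≤ x) (hy : 0 ≤ y) :
    27 * x * y ^ 2 ≤ 4 * (x + y) ^ 3 := by
  -- `4 (x + y)³ - 27 x y² = (y - 2x)² (x + 4y)`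
  nlinarith [mul_nonneg (sq_nonneg (y - 2 * x)) (add_nonneg hx (mul_nonneg zero_le_four hy))]

lemma mul_sq_le_sq_add_sq {a b : ℝ} (hab : a ^ 2 + b ^ 2 ≤ 1) :
    3 * √3 / 2 * (a * b ^ 2) ≤ a ^ 2 + b ^ 2 := by
  have hsq : (3 * √3 / 2 * (a * b ^ 2)) ^ 2 ≤ (a ^ 2 + b ^ 2) ^ 2 :=
    calc (3 * √3 / 2 * (a * b ^ 2)) ^ 2 = 27 * a ^ 2 * (b ^ 2) ^ 2 / 4 := by
          rw [mul_pow, div_pow, mul_pow, Real.sq_sqrt zero_le_three]; ring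
      _ ≤ (a ^ 2 + b ^ 2) ^ 3 := by
          linarith [mul_sq_le_add_pow_three (sq_nonneg a) (sq_nonneg b)]
      _ ≤ (a ^ 2 + b ^ 2) ^ 2 := pow_le_pow_of_le_one (by positivity) hab (by norm_num)
  exact le_of_sq_le_sq hsq (by positivity)

lemma re_inner_shear_le (c : ℂ) (z : ℂ × ℂ) :
    ((-z.1 + c * z.2 ^ 2) * (starRingEnd ℂ) z.1 + (-z.2) * (starRingEnd ℂ) z.2).re
      ≤ ‖c‖ * (‖z.1‖ * ‖z.2‖ ^ 2) - (‖z.1‖ ^ 2 + ‖z.2‖ ^ 2) := by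
  have hre : ((-z.1 + c * z.2 ^ 2) * (starRingEnd ℂ) z.1 + (-z.2) * (starRingEnd ℂ) z.2).re
      = (c * z.2 ^ 2 * (starRingEnd ℂ) z.1).re - (‖z.1‖ ^ 2 + ‖z.2‖ ^ 2) := by
    simp only [add_mul, neg_mul, mul_conj, add_re, neg_re, ← normSq_eq_norm_sq, ofReal_re]
    ring
  have hnorm : ‖c * z.2 ^ 2 * (starRingEnd ℂ) z.1‖ = ‖c‖ * (‖z.1‖ * ‖z.2‖ ^ 2) := by
    rw [norm_mul, norm_mul, norm_pow, norm_conj]; ring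
  rw [hre, ← hnorm]
  exact sub_le_sub_right (re_le_norm _) _

lemma hasFDerivAt_shear_zero (c : ℂ) :
    HasFDerivAt (fun z : ℂ × ℂ => (-z.1 + c * z.2 ^ 2, -z.2))
      (-ContinuousLinearMap.id ℂ (ℂ × ℂ)) 0 :=
  ((hasFDerivAt_fst.neg.add ((hasFDerivAt_snd.pow 2).const_mul c)).prodMk
    hasFDerivAt_snd.neg).congr_fderiv (by ext <;> simp)

theorem shear_mem_MminusClass {c : ℂ} (hc : ‖c‖ ≤ 3 * √3 / 2) :
    MminusClass (fun z : ℂ × ℂ => (-z.1 + c * z.2 ^ 2, -z.2)) := by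
  refine ⟨(by fun_prop : Differentiable ℂ _).differentiableOn, by simp,
    fun z => by simp [(hasFDerivAt_shear_zero c).fderiv], fun z hz => ?_⟩
  have hz : ‖z.1‖ ^ 2 + ‖z.2‖ ^ 2 ≤ 1 := le_of_lt hz
  calc _ ≤ ‖c‖ * (‖z.1‖ * ‖z.2‖ ^ 2) - (‖z.1‖ ^ 2 + ‖z.2‖ ^ 2) := re_inner_shear_le c z
    _ ≤ 3 * √3 / 2 * (‖z.1‖ * ‖z.2‖ ^ 2) - (‖z.1‖ ^ 2 + ‖z.2‖ ^ 2) := by gcongr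
    _ ≤ 0 := sub_nonpos.mpr (mul_sq_le_sq_add_sq hz)

/-- The extremal shear vector field belongs to the class `M₋`. -/
theorem extremal_mem_Mminus :
    MminusClass (fun z : ℂ × ℂ =>
      (-z.1 + ((3 * Real.sqrt 3 / 2 : ℝ) : ℂ) * z.2 ^ 2, -z.2)) :=
  shear_mem_MminusClass (by rw [norm_real, Real.norm_of_nonneg (by positivity)])
end
end
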